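/- arXiv:2106.04170 — 6 statements merged into one kernel-verified Lean document; each statement's English description precedes it below -/
import Mathlib

section
/- Let π₁ and π₂ be probability density functions on ℝ^d with Hellinger distance D_H(π₁,π₂) ≤ e < 1/√2. Then for any function h with finite variances under both densities, |E_{π₁}(h) - E_{π₂}(h)| ≤ (√2 e)/(1 - √2 e) · (√Var_{π₁}(h) + √Var_{π₂}(h)). -/
/-!
With `g = √π₁ - √π₂` one has `π₁ - π₂ = (√π₁ + √π₂) g`, hence, writing `mᵢ = E_{πᵢ}(h)`,
`m₁ - m₂ = ∫ (h - m₂) √π₁ g + ∫ (h - m₂) √π₂ g`. By Cauchy–Schwarz the two terms are at most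
`√(Var_{π₁}(h) + (m₁ - m₂)²) ‖g‖₂` and `√Var_{π₂}(h) ‖g‖₂`, and `‖g‖₂ = √2 D_H(π₁, π₂) ≤ √2 e`.
So `Δ = |m₁ - m₂|` satisfies `Δ ≤ √2 e (√Var_{π₁}(h) + Δ + √Var_{π₂}(h))`, which can be solved
for `Δ` because `√2 e < 1`.
-/

open MeasureTheory Real

section

variable {α : Type*} [MeasurableSpace α] {μ : Measure α}

theorem abs_integral_mul_le_sqrt_mul_sqrt {f g : α → ℝ} (hf : MemLp f 2 μ) (hg : MemLp g 2 μ) :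
    |∫ x, f x * g x ∂μ| ≤ √(∫ x, f x ^ 2 ∂μ) * √(∫ x, g x ^ 2 ∂μ) := by
  have holder := integral_mul_norm_le_Lp_mul_Lq (μ := μ) Real.HolderConjugate.two_two
    (by simpa using hf) (by simpa using hg)
  simp only [Real.norm_eq_abs, ← abs_mul, Real.rpow_two, sq_abs, ← Real.sqrt_eq_rpow] at holder
  exact abs_integral_le_integral_abs.trans holder

theorem memLp_two_sqrt {p : α → ℝ} (hp : Integrable p μ) (hp0 : ∀ x, 0 ≤ p x) :
    MemLp (fun x => √(p x)) 2 μ := by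
  refine (memLp_two_iff_integrable_sq
    (continuous_sqrt.comp_aestronglyMeasurable hp.aestronglyMeasurable)).2 ?_
  simpa only [sq_sqrt (hp0 _)] using hp

noncomputable def densityMean (μ : Measure α) (p h : α → ℝ) : ℝ := ∫ x, h x * p x ∂μ

noncomputable def densityVar (μ : Measure α) (p h : α → ℝ) : ℝ :=
  ∫ x, (h x - densityMean μ p h) ^ 2 * p x ∂μ

theorem sub_sq_mul_eq (a c m t : ℝ) :
    (a - c) ^ 2 * t = (a - m) ^ 2 * t + 2 * (m - c) * (a * t - m * t) + (m - c) ^ 2 * t := by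
  ring

variable {p h : α → ℝ}

theorem integrable_sq_sub_mul (hp : Integrable p μ) (hhp : Integrable (fun x => h x * p x) μ)
    (hvar : Integrable (fun x => (h x - densityMean μ p h) ^ 2 * p x) μ) (c : ℝ) :
    Integrable (fun x => (h x - c) ^ 2 * p x) μ := by
  set m := densityMean μ p h
  simp only [sub_sq_mul_eq (h _) c m]
  exact (hvar.add ((hhp.sub (hp.const_mul m)).const_mul _)).add (hp.const_mul _)

theorem integral_sq_sub_mul (hp : Integrable p μ) (hp1 : ∫ x, p x ∂μ = 1)
    (hhp : Integrable (fun x => h x * p x) μ)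
    (hvar : Integrable (fun x => (h x - densityMean μ p h) ^ 2 * p x) μ) (c : ℝ) :
    ∫ x, (h x - c) ^ 2 * p x ∂μ = densityVar μ p h + (densityMean μ p h - c) ^ 2 := by
  set m := densityMean μ p h
  simp only [sub_sq_mul_eq (h _) c m]
  have hcentered : Integrable (fun x => 2 * (m - c) * (h x * p x - m * p x)) μ :=
    (hhp.sub (hp.const_mul m)).const_mul _
  have hfirst : Integrable (fun x => (h x - m) ^ 2 * p x + 2 * (m - c) * (h x * p x - m * p x)) μ :=
    hvar.add hcentered
  rw [integral_add hfirst (hp.const_mul _), integral_add hvar hcentered,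
    integral_const_mul, integral_const_mul, integral_sub hhp (hp.const_mul m),
    integral_const_mul, hp1]
  simp only [densityVar, m, densityMean]
  ring

theorem memLp_two_sub_mul_sqrt (hp : Integrable p μ) (hp0 : ∀ x, 0 ≤ p x)
    (hhp : Integrable (fun x => h x * p x) μ)
    (hvar : Integrable (fun x => (h x - densityMean μ p h) ^ 2 * p x) μ) (c : ℝ) :
    MemLp (fun x => (h x - c) * √(p x)) 2 μ := by
  -- `h` itself need not be measurable, only `h * p` is.
  have hquot : (fun x => (h x - c) * √(p x)) = fun x => (h x * p x - c * p x) / √(p x) := by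
    funext x
    rcases (hp0 x).eq_or_lt with h0 | h0
    · simp [← h0]
    · rw [eq_div_iff (sqrt_pos.2 h0).ne', mul_assoc, mul_self_sqrt (hp0 x)]
      ring
  have hmeas : AEStronglyMeasurable (fun x => (h x - c) * √(p x)) μ := by
    rw [hquot]
    exact ((hhp.sub (hp.const_mul c)).aemeasurable.div
      (memLp_two_sqrt hp hp0).aestronglyMeasurable.aemeasurable).aestronglyMeasurable
  refine (memLp_two_iff_integrable_sq hmeas).2 ?_
  simpa only [mul_pow, sq_sqrt (hp0 _)] using integrable_sq_sub_mul hp hhp hvar c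

variable {q : α → ℝ}

theorem densityMean_sub_densityMean_eq (hp : Integrable p μ) (hq : Integrable q μ)
    (hp0 : ∀ x, 0 ≤ p x) (hq0 : ∀ x, 0 ≤ q x) (hpq : ∫ x, p x ∂μ = ∫ x, q x ∂μ)
    (hhp : Integrable (fun x => h x * p x) μ) (hhq : Integrable (fun x => h x * q x) μ)
    (hvarp : Integrable (fun x => (h x - densityMean μ p h) ^ 2 * p x) μ)
    (hvarq : Integrable (fun x => (h x - densityMean μ q h) ^ 2 * q x) μ) (c : ℝ) :
    densityMean μ p h - densityMean μ q h =
      (∫ x, (h x - c) * √(p x) * (√(p x) - √(q x)) ∂μ) +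
        ∫ x, (h x - c) * √(q x) * (√(p x) - √(q x)) ∂μ := by
  have hdiff : MemLp (fun x => √(p x) - √(q x)) 2 μ :=
    (memLp_two_sqrt hp hp0).sub (memLp_two_sqrt hq hq0)
  rw [← integral_add (f := fun x => (h x - c) * √(p x) * (√(p x) - √(q x)))
    (g := fun x => (h x - c) * √(q x) * (√(p x) - √(q x)))
    ((memLp_two_sub_mul_sqrt hp hp0 hhp hvarp c).integrable_mul hdiff)
    ((memLp_two_sub_mul_sqrt hq hq0 hhq hvarq c).integrable_mul hdiff)]
  have hpointwise : ∀ x, (h x - c) * √(p x) * (√(p x) - √(q x)) +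
      (h x - c) * √(q x) * (√(p x) - √(q x)) = (h x * p x - c * p x) - (h x * q x - c * q x) := by
    intro x
    linear_combination (h x - c) * mul_self_sqrt (hp0 x) - (h x - c) * mul_self_sqrt (hq0 x)
  have hcp : Integrable (fun x => h x * p x - c * p x) μ := hhp.sub (hp.const_mul c)
  have hcq : Integrable (fun x => h x * q x - c * q x) μ := hhq.sub (hq.const_mul c)
  simp only [hpointwise]
  rw [integral_sub hcp hcq,
    integral_sub hhp (hp.const_mul c), integral_sub hhq (hq.const_mul c),
    integral_const_mul, integral_const_mul, hpq, densityMean, densityMean]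
  ring

theorem abs_densityMean_sub_densityMean_le (hp : Integrable p μ) (hq : Integrable q μ)
    (hp0 : ∀ x, 0 ≤ p x) (hq0 : ∀ x, 0 ≤ q x)
    (hp1 : ∫ x, p x ∂μ = 1) (hq1 : ∫ x, q x ∂μ = 1)
    (hhp : Integrable (fun x => h x * p x) μ) (hhq : Integrable (fun x => h x * q x) μ)
    (hvarp : Integrable (fun x => (h x - densityMean μ p h) ^ 2 * p x) μ)
    (hvarq : Integrable (fun x => (h x - densityMean μ q h) ^ 2 * q x) μ) :
    |densityMean μ p h - densityMean μ q h| ≤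
      (√(densityVar μ p h) + |densityMean μ p h - densityMean μ q h| + √(densityVar μ q h)) *
        √(∫ x, (√(p x) - √(q x)) ^ 2 ∂μ) := by
  have hdiff : MemLp (fun x => √(p x) - √(q x)) 2 μ :=
    (memLp_two_sqrt hp hp0).sub (memLp_two_sqrt hq hq0)
  set c := densityMean μ q h
  have hcsp := abs_integral_mul_le_sqrt_mul_sqrt (memLp_two_sub_mul_sqrt hp hp0 hhp hvarp c) hdiff
  have hcsq := abs_integral_mul_le_sqrt_mul_sqrt (memLp_two_sub_mul_sqrt hq hq0 hhq hvarq c) hdiff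
  simp only [mul_pow, sq_sqrt (hp0 _), sq_sqrt (hq0 _)] at hcsp hcsq
  rw [integral_sq_sub_mul hp hp1 hhp hvarp, ← sq_abs] at hcsp
  rw [integral_sq_sub_mul hq hq1 hhq hvarq, sub_self, zero_pow two_ne_zero, add_zero] at hcsq
  have hbias : √(densityVar μ p h + |densityMean μ p h - c| ^ 2) ≤
      √(densityVar μ p h) + |densityMean μ p h - c| := by
    have hvar0 : 0 ≤ densityVar μ p h :=
      integral_nonneg fun x => mul_nonneg (sq_nonneg _) (hp0 x)
    refine sqrt_le_iff.2 ⟨by positivity, ?_⟩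
    nlinarith [sq_sqrt hvar0, sqrt_nonneg (densityVar μ p h), abs_nonneg (densityMean μ p h - c)]
  calc |densityMean μ p h - c|
      = |(∫ x, (h x - c) * √(p x) * (√(p x) - √(q x)) ∂μ) +
          ∫ x, (h x - c) * √(q x) * (√(p x) - √(q x)) ∂μ| := by
        rw [densityMean_sub_densityMean_eq hp hq hp0 hq0 (hp1.trans hq1.symm) hhp hhq hvarp hvarq c]
    _ ≤ _ := abs_add_le _ _
    _ ≤ _ := add_le_add hcsp hcsq
    _ ≤ _ := by
      rw [add_mul]
      gcongr

theorem le_div_one_sub_mul_of_le_mul {Δ a b s : ℝ} (hs : s < 1) (h : Δ ≤ (a + Δ + b) * s) :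
    Δ ≤ s / (1 - s) * (a + b) := by
  rw [div_mul_eq_mul_div, le_div_iff₀ (sub_pos.2 hs)]
  linarith

end

/-- If the Hellinger distance between two probability densities `π₁, π₂` on `ℝ^d`
is at most `e < 1/√2`, then for any `h` with finite variances under both,
`|E_{π₁}(h) - E_{π₂}(h)| ≤ (√2 e)/(1 - √2 e) (√Var_{π₁}(h) + √Var_{π₂}(h))`. -/
theorem stmt_0 {d : ℕ} (π₁ π₂ h : (Fin d → ℝ) → ℝ)
    (hπ₁pos : ∀ x, 0 ≤ π₁ x) (hπ₂pos : ∀ x, 0 ≤ π₂ x)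
    (hπ₁int : ∫ x, π₁ x = 1) (hπ₂int : ∫ x, π₂ x = 1)
    (e : ℝ) (he : e < 1 / Real.sqrt 2)
    (hHell : Real.sqrt ((1/2) * ∫ x, (Real.sqrt (π₁ x) - Real.sqrt (π₂ x))^2) ≤ e)
    (hmean₁ : Integrable (fun x => h x * π₁ x))
    (hmean₂ : Integrable (fun x => h x * π₂ x))
    (hvar₁ : Integrable (fun x => (h x - ∫ y, h y * π₁ y)^2 * π₁ x))
    (hvar₂ : Integrable (fun x => (h x - ∫ y, h y * π₂ y)^2 * π₂ x)) :
    |(∫ x, h x * π₁ x) - ∫ x, h x * π₂ x| ≤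
      (Real.sqrt 2 * e) / (1 - Real.sqrt 2 * e) *
        (Real.sqrt (∫ x, (h x - ∫ y, h y * π₁ y)^2 * π₁ x) +
         Real.sqrt (∫ x, (h x - ∫ y, h y * π₂ y)^2 * π₂ x)) := by
  have hπ₁ : Integrable π₁ := .of_integral_ne_zero (by simp [hπ₁int])
  have hπ₂ : Integrable π₂ := .of_integral_ne_zero (by simp [hπ₂int])
  have hL2 : √(∫ x, (√(π₁ x) - √(π₂ x)) ^ 2) ≤ √2 * e := by
    calc √(∫ x, (√(π₁ x) - √(π₂ x)) ^ 2)
        = √2 * √((1 / 2) * ∫ x, (√(π₁ x) - √(π₂ x)) ^ 2) := by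
          rw [← sqrt_mul zero_le_two]; ring_nf
      _ ≤ √2 * e := mul_le_mul_of_nonneg_left hHell (sqrt_nonneg 2)
  have hs1 : √2 * e < 1 := by
    rwa [lt_div_iff₀' (sqrt_pos.2 zero_lt_two)] at he
  have hestimate := abs_densityMean_sub_densityMean_le hπ₁ hπ₂ hπ₁pos hπ₂pos hπ₁int hπ₂int
    hmean₁ hmean₂ hvar₁ hvar₂
  exact le_div_one_sub_mul_of_le_mul hs1
    (hestimate.trans (mul_le_mul_of_nonneg_left hL2 (by positivity)))
end

section
/- Let π_{Y,Θ} and π̃_{Y,Θ} be two joint probability densities. Then the expected (over Y ∼ π_Y) squared Hellinger distance between the conditional densities satisfies E_{Y∼π_Y}[D_H(π_{Θ|Y}, π̃_{Θ|Y})²] ≤ 4 D_H(π_{Y,Θ}, π̃_{Y,Θ})². -/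
open MeasureTheory

section Aux

variable {α : Type*} [MeasurableSpace α] {μ : Measure α}

lemma aux_sqrt_meas {f : α → ℝ} (hf : AEStronglyMeasurable f μ) :
    AEStronglyMeasurable (fun x => Real.sqrt (f x)) μ :=
  Real.continuous_sqrt.comp_aestronglyMeasurable hf

lemma aux_uv_int {f g : α → ℝ} (hf : Integrable f μ) (hg : Integrable g μ)
    (hf0 : ∀ x, 0 ≤ f x) (hg0 : ∀ x, 0 ≤ g x) :
    Integrable (fun x => Real.sqrt (f x) * Real.sqrt (g x)) μ := by
  refine Integrable.mono' ((hf.add hg).div_const 2)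
    ((aux_sqrt_meas hf.aestronglyMeasurable).mul (aux_sqrt_meas hg.aestronglyMeasurable))
    (Filter.Eventually.of_forall fun x => ?_)
  have h1 := Real.sq_sqrt (hf0 x)
  have h2 := Real.sq_sqrt (hg0 x)
  have h3 := Real.sqrt_nonneg (f x)
  have h4 := Real.sqrt_nonneg (g x)
  rw [Real.norm_eq_abs, abs_of_nonneg (mul_nonneg h3 h4)]
  simp only [Pi.add_apply]
  nlinarith [sq_nonneg (Real.sqrt (f x) - Real.sqrt (g x))]

lemma aux_sq_int {f g : α → ℝ} (hf : Integrable f μ) (hg : Integrable g μ)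
    (hf0 : ∀ x, 0 ≤ f x) (hg0 : ∀ x, 0 ≤ g x) :
    Integrable (fun x => (Real.sqrt (f x) - Real.sqrt (g x))^2) μ := by
  refine Integrable.mono' (hf.add hg)
    (((aux_sqrt_meas hf.aestronglyMeasurable).sub
      (aux_sqrt_meas hg.aestronglyMeasurable)).pow 2)
    (Filter.Eventually.of_forall fun x => ?_)
  have h1 := Real.sq_sqrt (hf0 x)
  have h2 := Real.sq_sqrt (hg0 x)
  have h3 := Real.sqrt_nonneg (f x)
  have h4 := Real.sqrt_nonneg (g x)
  rw [Real.norm_eq_abs, abs_of_nonneg (sq_nonneg _)]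
  simp only [Pi.add_apply]
  nlinarith [mul_nonneg h3 h4]

/-- Cauchy–Schwarz: `∫ √f √g ≤ √(∫f) √(∫g)` for nonnegative integrable `f, g`. -/
lemma aux_cs {f g : α → ℝ} (hf : Integrable f μ) (hg : Integrable g μ)
    (hf0 : ∀ x, 0 ≤ f x) (hg0 : ∀ x, 0 ≤ g x) :
    ∫ x, Real.sqrt (f x) * Real.sqrt (g x) ∂μ ≤
      Real.sqrt (∫ x, f x ∂μ) * Real.sqrt (∫ x, g x ∂μ) := by
  set m := ∫ x, f x ∂μ with hmdef
  set m' := ∫ x, g x ∂μ with hm'def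
  have hm0 : 0 ≤ m := integral_nonneg hf0
  have hm'0 : 0 ≤ m' := integral_nonneg hg0
  rcases eq_or_lt_of_le hm0 with hm | hm
  · -- ∫ f = 0, hence f = 0 a.e.
    have hf0' : f =ᵐ[μ] 0 := (integral_eq_zero_iff_of_nonneg hf0 hf).mp hm.symm
    have hz : (fun x => Real.sqrt (f x) * Real.sqrt (g x)) =ᵐ[μ] 0 := by
      filter_upwards [hf0'] with x hx
      simp [hx]
    rw [integral_congr_ae hz]
    simp only [Pi.zero_apply, integral_zero]
    positivity
  rcases eq_or_lt_of_le hm'0 with hm' | hm'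
  · have hg0' : g =ᵐ[μ] 0 := (integral_eq_zero_iff_of_nonneg hg0 hg).mp hm'.symm
    have : (fun x => Real.sqrt (f x) * Real.sqrt (g x)) =ᵐ[μ] 0 := by
      filter_upwards [hg0'] with x hx
      simp [hx]
    rw [integral_congr_ae this]
    simp only [Pi.zero_apply, integral_zero]
    positivity
  · -- both positive
    have hsm : (0:ℝ) < Real.sqrt m := Real.sqrt_pos.mpr hm
    have hsm' : (0:ℝ) < Real.sqrt m' := Real.sqrt_pos.mpr hm'
    have key : ∀ x, 2 * (Real.sqrt m * Real.sqrt m') * (Real.sqrt (f x) * Real.sqrt (g x)) ≤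
        m' * f x + m * g x := by
      intro x
      have h1 := Real.sq_sqrt (hf0 x)
      have h2 := Real.sq_sqrt (hg0 x)
      have h3 := Real.sq_sqrt hm0
      have h4 := Real.sq_sqrt hm'0
      nlinarith [sq_nonneg (Real.sqrt m' * Real.sqrt (f x) - Real.sqrt m * Real.sqrt (g x))]
    have huv := aux_uv_int hf hg hf0 hg0
    have hle : ∫ x, 2 * (Real.sqrt m * Real.sqrt m') * (Real.sqrt (f x) * Real.sqrt (g x)) ∂μ ≤
        ∫ x, (m' * f x + m * g x) ∂μ := by
      refine integral_mono (huv.const_mul _) ((hf.const_mul m').add (hg.const_mul m)) key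
    rw [integral_const_mul, integral_add (hf.const_mul m') (hg.const_mul m),
      integral_const_mul, integral_const_mul] at hle
    have h3 := Real.sq_sqrt hm0
    have h4 := Real.sq_sqrt hm'0
    have hpos : (0:ℝ) < 2 * (Real.sqrt m * Real.sqrt m') := by positivity
    refine le_of_mul_le_mul_left ?_ hpos
    calc 2 * (Real.sqrt m * Real.sqrt m') * ∫ x, Real.sqrt (f x) * Real.sqrt (g x) ∂μ
        ≤ m' * m + m * m' := hle
      _ = 2 * (Real.sqrt m * Real.sqrt m') * (Real.sqrt m * Real.sqrt m') := by nlinarith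
  
/-- Reverse triangle inequality in L²: `(√∫f − √∫g)² ≤ ∫ (√f − √g)²`. -/
lemma aux_rt {f g : α → ℝ} (hf : Integrable f μ) (hg : Integrable g μ)
    (hf0 : ∀ x, 0 ≤ f x) (hg0 : ∀ x, 0 ≤ g x) :
    (Real.sqrt (∫ x, f x ∂μ) - Real.sqrt (∫ x, g x ∂μ))^2 ≤
      ∫ x, (Real.sqrt (f x) - Real.sqrt (g x))^2 ∂μ := by
  have hexp : (fun x => (Real.sqrt (f x) - Real.sqrt (g x))^2) =
      fun x => f x + g x - 2 * (Real.sqrt (f x) * Real.sqrt (g x)) := by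
    funext x
    have h1 := Real.sq_sqrt (hf0 x)
    have h2 := Real.sq_sqrt (hg0 x)
    ring_nf
    nlinarith [h1, h2]
  have hfg : Integrable (fun x => f x + g x) μ := hf.add hg
  rw [hexp, integral_sub hfg ((aux_uv_int hf hg hf0 hg0).const_mul 2),
    integral_add hf hg, integral_const_mul]
  have hcs := aux_cs hf hg hf0 hg0
  have h3 := Real.sq_sqrt (integral_nonneg (μ := μ) hf0)
  have h4 := Real.sq_sqrt (integral_nonneg (μ := μ) hg0)
  nlinarith

/-- Pointwise (in `y`) bound for the conditional Hellinger integrand. -/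
lemma aux_cond {f g : α → ℝ} (hf : Integrable f μ) (hg : Integrable g μ)
    (hf0 : ∀ x, 0 ≤ f x) (hg0 : ∀ x, 0 ≤ g x) :
    ((1/2) * ∫ x, (Real.sqrt (f x / ∫ x', f x' ∂μ) -
        Real.sqrt (g x / ∫ x', g x' ∂μ))^2 ∂μ) * (∫ x', f x' ∂μ) ≤
      (∫ x, (Real.sqrt (f x) - Real.sqrt (g x))^2 ∂μ) +
        (Real.sqrt (∫ x', f x' ∂μ) - Real.sqrt (∫ x', g x' ∂μ))^2 := by
  set m := ∫ x', f x' ∂μ with hmdef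
  set m' := ∫ x', g x' ∂μ with hm'def
  have hm0 : 0 ≤ m := integral_nonneg hf0
  have hm'0 : 0 ≤ m' := integral_nonneg hg0
  have hF0 : 0 ≤ ∫ x, (Real.sqrt (f x) - Real.sqrt (g x))^2 ∂μ :=
    integral_nonneg fun x => sq_nonneg _
  rcases eq_or_lt_of_le hm0 with hm | hm
  · rw [← hm, mul_zero]
    positivity
  rcases eq_or_lt_of_le hm'0 with hm' | hm'
  · -- m' = 0 : g = 0 a.e., conditional of g is 0 everywhere since x/0 = 0
    have hg0' : g =ᵐ[μ] 0 := (integral_eq_zero_iff_of_nonneg hg0 hg).mp hm'.symm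
    have h1 : (fun x => (Real.sqrt (f x / m) - Real.sqrt (g x / m'))^2) =
        fun x => f x / m := by
      funext x
      rw [← hm', div_zero, Real.sqrt_zero, sub_zero,
        Real.sq_sqrt (div_nonneg (hf0 x) hm0)]
    have h2 : ∫ x, (Real.sqrt (f x / m) - Real.sqrt (g x / m'))^2 ∂μ = 1 := by
      rw [h1, integral_div, ← hmdef, div_self (ne_of_gt hm)]
    rw [h2, mul_one]
    have h3 : (fun x => (Real.sqrt (f x) - Real.sqrt (g x))^2) =ᵐ[μ] f := by
      filter_upwards [hg0'] with x hx
      simp only [Pi.zero_apply] at hx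
      rw [hx, Real.sqrt_zero, sub_zero, Real.sq_sqrt (hf0 x)]
    rw [integral_congr_ae h3, ← hmdef, ← hm', Real.sqrt_zero, sub_zero,
      Real.sq_sqrt hm0]
    linarith
  · -- main case : m > 0, m' > 0
    have hsm : (0:ℝ) < Real.sqrt m := Real.sqrt_pos.mpr hm
    have hsm' : (0:ℝ) < Real.sqrt m' := Real.sqrt_pos.mpr hm'
    set c : ℝ := Real.sqrt m / Real.sqrt m' with hcdef
    have halg : ∀ a b s t u : ℝ, s ≠ 0 → t ≠ 0 → s * s = u →
        (a / s - b / t)^2 * u = (a - b * (s / t))^2 := by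
      intro a b s t u hs ht hu
      subst hu
      field_simp
    have hid : ∀ x, (Real.sqrt (f x / m) - Real.sqrt (g x / m'))^2 * m =
        (Real.sqrt (f x) - Real.sqrt (g x) * c)^2 := by
      intro x
      rw [Real.sqrt_div (hf0 x), Real.sqrt_div (hg0 x), hcdef]
      exact halg _ _ _ _ _ hsm.ne' hsm'.ne' (Real.mul_self_sqrt hm0)
    have step1 : ((1/2) * ∫ x, (Real.sqrt (f x / m) - Real.sqrt (g x / m'))^2 ∂μ) * m =
        (1/2) * ∫ x, (Real.sqrt (f x) - Real.sqrt (g x) * c)^2 ∂μ := by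
      have : ((1/2) * ∫ x, (Real.sqrt (f x / m) - Real.sqrt (g x / m'))^2 ∂μ) * m =
          (1/2) * ((∫ x, (Real.sqrt (f x / m) - Real.sqrt (g x / m'))^2 ∂μ) * m) := by
        ring
      rw [this, ← integral_mul_const]
      simp only [hid]
    rw [step1]
    have hH : Integrable (fun x => (Real.sqrt (f x) - Real.sqrt (g x))^2 +
        g x * (1 - c)^2) μ :=
      (aux_sq_int hf hg hf0 hg0).add (hg.mul_const _)
    have hbound : ∀ x, (1/2) * (Real.sqrt (f x) - Real.sqrt (g x) * c)^2 ≤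
        (Real.sqrt (f x) - Real.sqrt (g x))^2 + g x * (1 - c)^2 := by
      intro x
      have h2 := Real.sq_sqrt (hg0 x)
      nlinarith [sq_nonneg ((Real.sqrt (f x) - Real.sqrt (g x)) -
        Real.sqrt (g x) * (1 - c))]
    have hmono : ∫ x, (1/2) * (Real.sqrt (f x) - Real.sqrt (g x) * c)^2 ∂μ ≤
        ∫ x, ((Real.sqrt (f x) - Real.sqrt (g x))^2 + g x * (1 - c)^2) ∂μ :=
      integral_mono_of_nonneg
        (Filter.Eventually.of_forall fun x => by positivity) hH
        (Filter.Eventually.of_forall hbound)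
    rw [integral_const_mul] at hmono
    rw [integral_add (aux_sq_int hf hg hf0 hg0) (hg.mul_const _),
      integral_mul_const, ← hm'def] at hmono
    have halg2 : ∀ s t u : ℝ, t ≠ 0 → t * t = u → u * (1 - s / t)^2 = (s - t)^2 := by
      intro s t u ht hu
      subst hu
      field_simp
      ring
    have hlast : m' * (1 - c)^2 = (Real.sqrt m - Real.sqrt m')^2 := by
      rw [hcdef]
      exact halg2 _ _ _ hsm'.ne' (Real.mul_self_sqrt hm'0)
    calc (1/2) * ∫ x, (Real.sqrt (f x) - Real.sqrt (g x) * c)^2 ∂μ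
        ≤ (∫ x, (Real.sqrt (f x) - Real.sqrt (g x))^2 ∂μ) + m' * (1 - c)^2 := hmono
      _ ≤ (∫ x, (Real.sqrt (f x) - Real.sqrt (g x))^2 ∂μ) +
          (Real.sqrt m - Real.sqrt m')^2 := by rw [hlast]

end Aux

/-- The expected (over `Y ∼ π_Y`) squared Hellinger distance between the
conditionals `π_{Θ|Y}` and `π̃_{Θ|Y}` is at most `4` times the squared Hellinger
distance between the joint densities. -/
theorem stmt_2 {dY dΘ : ℕ} (π π' : (Fin dY → ℝ) → (Fin dΘ → ℝ) → ℝ)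
    (hπpos : ∀ y θ, 0 ≤ π y θ) (hπ'pos : ∀ y θ, 0 ≤ π' y θ)
    (hπint : ∫ y, ∫ θ, π y θ = 1) (hπ'int : ∫ y, ∫ θ, π' y θ = 1)
    (hπInt : Integrable (fun p : (Fin dY → ℝ) × (Fin dΘ → ℝ) => π p.1 p.2))
    (hπ'Int : Integrable (fun p : (Fin dY → ℝ) × (Fin dΘ → ℝ) => π' p.1 p.2)) :
    (∫ y, ((1/2) * ∫ θ, (Real.sqrt (π y θ / ∫ θ', π y θ') -
          Real.sqrt (π' y θ / ∫ θ', π' y θ'))^2) * (∫ θ', π y θ')) ≤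
      4 * ((1/2) * ∫ y, ∫ θ, (Real.sqrt (π y θ) - Real.sqrt (π' y θ))^2) := by
  have h1 : Integrable (fun p : (Fin dY → ℝ) × (Fin dΘ → ℝ) => π p.1 p.2)
      (volume.prod volume) := hπInt
  have h1' : Integrable (fun p : (Fin dY → ℝ) × (Fin dΘ → ℝ) => π' p.1 p.2)
      (volume.prod volume) := hπ'Int
  have haeπ : ∀ᵐ y : Fin dY → ℝ, Integrable (fun θ => π y θ) := h1.prod_right_ae
  have haeπ' : ∀ᵐ y : Fin dY → ℝ, Integrable (fun θ => π' y θ) := h1'.prod_right_ae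
  -- F y = inner Hellinger integrand of the joints, G y = marginal Hellinger integrand
  set F : (Fin dY → ℝ) → ℝ :=
    fun y => ∫ θ, (Real.sqrt (π y θ) - Real.sqrt (π' y θ))^2 with hFdef
  set G : (Fin dY → ℝ) → ℝ :=
    fun y => (Real.sqrt (∫ θ', π y θ') - Real.sqrt (∫ θ', π' y θ'))^2 with hGdef
  have hQ : Integrable (fun p : (Fin dY → ℝ) × (Fin dΘ → ℝ) =>
      (Real.sqrt (π p.1 p.2) - Real.sqrt (π' p.1 p.2))^2) (volume.prod volume) :=
    aux_sq_int h1 h1' (fun p => hπpos _ _) (fun p => hπ'pos _ _)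
  have hFInt : Integrable F := hQ.integral_prod_left
  have hmInt : Integrable (fun y => ∫ θ', π y θ') := h1.integral_prod_left
  have hm'Int : Integrable (fun y => ∫ θ', π' y θ') := h1'.integral_prod_left
  have hGInt : Integrable G :=
    aux_sq_int hmInt hm'Int (fun y => integral_nonneg fun θ => hπpos y θ)
      (fun y => integral_nonneg fun θ => hπ'pos y θ)
  have hGF : G ≤ᵐ[volume] F := by
    filter_upwards [haeπ, haeπ'] with y hy hy'
    exact aux_rt hy hy' (hπpos y) (hπ'pos y)
  have hcond : (fun y => ((1/2) * ∫ θ, (Real.sqrt (π y θ / ∫ θ', π y θ') -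
      Real.sqrt (π' y θ / ∫ θ', π' y θ'))^2) * (∫ θ', π y θ')) ≤ᵐ[volume]
      fun y => F y + G y := by
    filter_upwards [haeπ, haeπ'] with y hy hy'
    exact aux_cond hy hy' (hπpos y) (hπ'pos y)
  have hstep : (∫ y, ((1/2) * ∫ θ, (Real.sqrt (π y θ / ∫ θ', π y θ') -
      Real.sqrt (π' y θ / ∫ θ', π' y θ'))^2) * (∫ θ', π y θ')) ≤
      ∫ y, (F y + G y) := by
    refine integral_mono_of_nonneg (Filter.Eventually.of_forall fun y => ?_)
      (hFInt.add hGInt) hcond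
    exact mul_nonneg (mul_nonneg (by norm_num)
      (integral_nonneg fun θ => sq_nonneg _)) (integral_nonneg fun θ => hπpos y θ)
  rw [integral_add hFInt hGInt] at hstep
  have h2 : ∫ y, G y ≤ ∫ y, F y := integral_mono_ae hGInt hFInt hGF
  calc (∫ y, ((1/2) * ∫ θ, (Real.sqrt (π y θ / ∫ θ', π y θ') -
          Real.sqrt (π' y θ / ∫ θ', π' y θ'))^2) * (∫ θ', π y θ'))
      ≤ (∫ y, F y) + ∫ y, G y := hstep
    _ ≤ 4 * ((1/2) * ∫ y, F y) := by linarith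
end

section
/- Let π_{Y,Θ} and π̃_{Y,Θ} be joint densities with D_H(π_{Y,Θ}, π̃_{Y,Θ}) ≤ ε. Then for any δ > 0, with probability greater than 1 - δ over Y ∼ π_Y, one has D_H(π_{Θ|Y}, π̃_{Θ|Y}) ≤ 2ε/δ. -/
/-!
Write `a = √π(y, ·)` and `b = √π̃(y, ·)` as vectors of `L²(Θ)`, so that `‖a‖² = π_Y(y)` and
`D_H(π_{Θ|y}, π̃_{Θ|y}) = ‖a/‖a‖ - b/‖b‖‖ / √2`. In any normed space
`‖a‖ ‖a/‖a‖ - b/‖b‖‖ ≤ ‖a - b‖ + |‖b‖ - ‖a‖| ≤ 2 ‖a - b‖`, hence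
`π_Y(y) D_H(π_{Θ|y}, π̃_{Θ|y}) ≤ 2 √π_Y(y) D_H(π(y, ·), π̃(y, ·))`. Integrating in `y` and applying
Cauchy–Schwarz gives `E_{π_Y}[D_H(π_{Θ|Y}, π̃_{Θ|Y})] ≤ 2 D_H(π, π̃) ≤ 2ε`, and Markov's inequality
finishes. The bound is strict: the conditional distance is strictly larger than `2ε/δ` on the
exceptional set, so if that set had `π_Y`-mass at least `δ`, the expectation bound would force
its mass to be zero.
-/

open MeasureTheory

lemma abs_one_sub_div_mul_le {a b : ℝ} (hb : 0 ≤ b) : |1 - a / b| * b ≤ |b - a| := by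
  rcases hb.eq_or_lt with rfl | hb
  · simp
  · rw [← abs_of_pos hb, ← abs_mul, abs_of_pos hb, sub_mul, div_mul_cancel₀ _ hb.ne', one_mul]

lemma norm_mul_norm_inv_smul_sub_inv_smul_le {E : Type*} [NormedAddCommGroup E] [NormedSpace ℝ E]
    (x y : E) : ‖x‖ * ‖‖x‖⁻¹ • x - ‖y‖⁻¹ • y‖ ≤ 2 * ‖x - y‖ := by
  have hx : (‖x‖ * ‖x‖⁻¹) • x = x := by
    rcases eq_or_ne x 0 with rfl | hx
    · simp
    · rw [mul_inv_cancel₀ (norm_ne_zero_iff.2 hx), one_smul]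
  calc ‖x‖ * ‖‖x‖⁻¹ • x - ‖y‖⁻¹ • y‖
      = ‖‖x‖ • (‖x‖⁻¹ • x - ‖y‖⁻¹ • y)‖ := by rw [norm_smul, norm_norm]
    _ = ‖(x - y) + (1 - ‖x‖ / ‖y‖) • y‖ := by
        rw [smul_sub, smul_smul, smul_smul, hx, sub_smul, one_smul, div_eq_mul_inv]
        abel_nf
    _ ≤ ‖x - y‖ + |1 - ‖x‖ / ‖y‖| * ‖y‖ := by
        grw [norm_add_le, norm_smul, Real.norm_eq_abs]
    _ ≤ ‖x - y‖ + ‖x - y‖ := by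
        grw [abs_one_sub_div_mul_le (norm_nonneg y), abs_sub_comm, abs_norm_sub_norm_le]
    _ = 2 * ‖x - y‖ := by ring

namespace MeasureTheory

section L2

variable {α : Type*} [MeasurableSpace α] {μ : Measure α} {u v : α → ℝ}

lemma MemLp.inner_toLp_toLp (hu : MemLp u 2 μ) (hv : MemLp v 2 μ) :
    inner ℝ (hu.toLp u) (hv.toLp v) = ∫ x, u x * v x ∂μ := by
  rw [L2.inner_def]
  refine integral_congr_ae ?_
  filter_upwards [hu.coeFn_toLp, hv.coeFn_toLp] with x hux hvx
  simp [hux, hvx, mul_comm]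

lemma MemLp.norm_toLp_eq_sqrt_integral_sq (hu : MemLp u 2 μ) :
    ‖hu.toLp u‖ = √(∫ x, u x ^ 2 ∂μ) := by
  rw [← Real.sqrt_sq (norm_nonneg _), ← real_inner_self_eq_norm_sq, hu.inner_toLp_toLp hu]
  simp_rw [sq]

lemma integral_mul_le_sqrt_integral_sq_mul_sqrt_integral_sq (hu : MemLp u 2 μ)
    (hv : MemLp v 2 μ) :
    ∫ x, u x * v x ∂μ ≤ √(∫ x, u x ^ 2 ∂μ) * √(∫ x, v x ^ 2 ∂μ) := by
  rw [← hu.inner_toLp_toLp hv, ← hu.norm_toLp_eq_sqrt_integral_sq,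
    ← hv.norm_toLp_eq_sqrt_integral_sq]
  exact real_inner_le_norm _ _

lemma memLp_two_sqrt {f : α → ℝ} (hf0 : 0 ≤ f) (hf : Integrable f μ) :
    MemLp (fun x => √(f x)) 2 μ := by
  refine (memLp_two_iff_integrable_sq
    (Real.continuous_sqrt.comp_aestronglyMeasurable hf.1)).2 (hf.congr ?_)
  exact ae_of_all _ fun x => (Real.sq_sqrt (hf0 x)).symm

lemma sqrt_integral_sq_mul_sqrt_integral_sq_normalize_sub_le (hu : MemLp u 2 μ)
    (hv : MemLp v 2 μ) :
    √(∫ x, u x ^ 2 ∂μ)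
        * √(∫ x, ((√(∫ t, u t ^ 2 ∂μ))⁻¹ * u x - (√(∫ t, v t ^ 2 ∂μ))⁻¹ * v x) ^ 2 ∂μ)
      ≤ 2 * √(∫ x, (u x - v x) ^ 2 ∂μ) := by
  have key := norm_mul_norm_inv_smul_sub_inv_smul_le (hu.toLp u) (hv.toLp v)
  rw [← MemLp.toLp_const_smul, ← MemLp.toLp_const_smul, ← MemLp.toLp_sub, ← MemLp.toLp_sub,
    MemLp.norm_toLp_eq_sqrt_integral_sq, MemLp.norm_toLp_eq_sqrt_integral_sq,
    MemLp.norm_toLp_eq_sqrt_integral_sq, MemLp.norm_toLp_eq_sqrt_integral_sq] at key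
  exact key

end L2

noncomputable def hellinger {α : Type*} [MeasurableSpace α] (μ : Measure α) (f g : α → ℝ) : ℝ :=
  √((1 / 2) * ∫ x, (√(f x) - √(g x)) ^ 2 ∂μ)

noncomputable def normalized {α : Type*} [MeasurableSpace α] (μ : Measure α) (f : α → ℝ) :
    α → ℝ :=
  fun x => f x / ∫ t, f t ∂μ

lemma hellinger_nonneg {α : Type*} [MeasurableSpace α] (μ : Measure α) (f g : α → ℝ) :
    0 ≤ hellinger μ f g :=
  Real.sqrt_nonneg _

lemma hellinger_sq {α : Type*} [MeasurableSpace α] (μ : Measure α) (f g : α → ℝ) :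
    hellinger μ f g ^ 2 = (1 / 2) * ∫ x, (√(f x) - √(g x)) ^ 2 ∂μ :=
  Real.sq_sqrt (mul_nonneg (by norm_num) (integral_nonneg fun _ => sq_nonneg _))

lemma integral_mul_hellinger_normalized_le {β : Type*} [MeasurableSpace β] {ν : Measure β}
    {f g : β → ℝ} (hf0 : 0 ≤ f) (hg0 : 0 ≤ g) (hf : Integrable f ν) (hg : Integrable g ν) :
    (∫ x, f x ∂ν) * hellinger ν (normalized ν f) (normalized ν g)
      ≤ 2 * √(∫ x, f x ∂ν) * hellinger ν f g := by
  have hsq {h : β → ℝ} (h0 : 0 ≤ h) : ∫ x, √(h x) ^ 2 ∂ν = ∫ x, h x ∂ν := by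
    simp_rw [Real.sq_sqrt (h0 _)]
  have key := sqrt_integral_sq_mul_sqrt_integral_sq_normalize_sub_le
    (memLp_two_sqrt hf0 hf) (memLp_two_sqrt hg0 hg)
  have hnorm {h : β → ℝ} (h0 : 0 ≤ h) (x : β) :
      √(h x / ∫ t, h t ∂ν) = (√(∫ t, h t ∂ν))⁻¹ * √(h x) := by
    rw [Real.sqrt_div (h0 x), div_eq_inv_mul]
  simp only [hsq hf0, hsq hg0] at key
  simp only [hellinger, normalized, hnorm hf0, hnorm hg0,
    Real.sqrt_mul (show (0 : ℝ) ≤ 1 / 2 by norm_num)]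
  have hscaled := mul_le_mul_of_nonneg_left key
    (mul_nonneg (Real.sqrt_nonneg (∫ x, f x ∂ν)) (Real.sqrt_nonneg (1 / 2)))
  nth_rw 1 [← Real.mul_self_sqrt (integral_nonneg hf0)]
  linarith

lemma integral_sub_lt_setIntegral_le_of_integral_mul_le {α : Type*} [MeasurableSpace α]
    {μ : Measure α} {w h : α → ℝ} {t δ : ℝ} (hw0 : 0 ≤ w) (hh0 : 0 ≤ h) (hw : Integrable w μ)
    (hh : AEStronglyMeasurable h μ) (hwh : Integrable (fun x => w x * h x) μ) (hδ : 0 < δ)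
    (hle : ∫ x, w x * h x ∂μ ≤ t * δ) :
    ∫ x, w x ∂μ - δ < ∫ x in {x | h x ≤ t}, w x ∂μ := by
  set S := {x | h x ≤ t}
  have hS : NullMeasurableSet S μ := nullMeasurableSet_le hh.aemeasurable aemeasurable_const
  rw [← integral_add_compl₀ hS hw, add_sub_assoc, add_lt_iff_neg_left, sub_neg]
  by_contra! hδS
  have ht : 0 ≤ t :=
    nonneg_of_mul_nonneg_left ((integral_nonneg fun x => mul_nonneg (hw0 x) (hh0 x)).trans hle) hδ
  have hgap : ∀ᵐ x ∂μ.restrict Sᶜ, t < h x :=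
    (ae_restrict_mem₀ hS.compl).mono fun _ hx => not_le.1 hx
  have hint : ∫ x in Sᶜ, w x * (h x - t) ∂μ ≤ 0 := by
    simp_rw [mul_sub]
    rw [integral_sub hwh.integrableOn (hw.integrableOn.mul_const t), integral_mul_const]
    have hwhS : ∫ x in Sᶜ, w x * h x ∂μ ≤ ∫ x, w x * h x ∂μ :=
      setIntegral_le_integral hwh (ae_of_all _ fun x => mul_nonneg (hw0 x) (hh0 x))
    have := mul_le_mul_of_nonneg_left hδS ht
    linarith
  -- `w * (h - t)` is nonnegative on `Sᶜ` with nonpositive integral, so `w` vanishes there.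
  have hnonneg : 0 ≤ᵐ[μ.restrict Sᶜ] fun x => w x * (h x - t) :=
    hgap.mono fun x hx => mul_nonneg (hw0 x) (sub_nonneg.2 hx.le)
  have hintegrable : IntegrableOn (fun x => w x * (h x - t)) Sᶜ μ := by
    simp_rw [mul_sub]
    exact hwh.integrableOn.sub (hw.integrableOn.mul_const t)
  have hzero : (fun x => w x * (h x - t)) =ᵐ[μ.restrict Sᶜ] 0 :=
    (integral_eq_zero_iff_of_nonneg_ae hnonneg hintegrable).1
      (hint.antisymm (integral_nonneg_of_ae hnonneg))
  have hw_zero : w =ᵐ[μ.restrict Sᶜ] 0 := by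
    filter_upwards [hzero, hgap] with x hx hxt
    exact (mul_eq_zero.1 hx).resolve_right (sub_pos.2 hxt).ne'
  rw [integral_congr_ae hw_zero, Pi.zero_def, integral_zero] at hδS
  exact hδ.not_ge hδS

section Disintegration

variable {α β : Type*} [MeasurableSpace α] [MeasurableSpace β] {μ : Measure α} {ν : Measure β}
  [SFinite ν] {π π' : α → β → ℝ}

lemma AEStronglyMeasurable.hellinger_prod
    (hπ : AEStronglyMeasurable (fun p : α × β => π p.1 p.2) (μ.prod ν))
    (hπ' : AEStronglyMeasurable (fun p : α × β => π' p.1 p.2) (μ.prod ν)) :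
    AEStronglyMeasurable (fun y => hellinger ν (π y) (π' y)) μ := by
  have hsqrt {F : α → β → ℝ} (hF : AEStronglyMeasurable (fun p : α × β => F p.1 p.2) (μ.prod ν)) :
      AEStronglyMeasurable (fun p : α × β => √(F p.1 p.2)) (μ.prod ν) :=
    Real.continuous_sqrt.comp_aestronglyMeasurable hF
  exact Real.continuous_sqrt.comp_aestronglyMeasurable
    ((((hsqrt hπ).sub (hsqrt hπ')).pow 2).integral_prod_right'.const_mul _)

lemma AEStronglyMeasurable.normalized_prod
    (hπ : AEStronglyMeasurable (fun p : α × β => π p.1 p.2) (μ.prod ν)) :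
    AEStronglyMeasurable (fun p : α × β => normalized ν (π p.1) p.2) (μ.prod ν) :=
  (hπ.aemeasurable.div (hπ.integral_prod_right'.comp_quasiMeasurePreserving
    Measure.quasiMeasurePreserving_fst).aemeasurable).aestronglyMeasurable

lemma memLp_two_hellinger_prod (hπ0 : ∀ y, 0 ≤ π y) (hπ'0 : ∀ y, 0 ≤ π' y)
    (hπ : Integrable (fun p : α × β => π p.1 p.2) (μ.prod ν))
    (hπ' : Integrable (fun p : α × β => π' p.1 p.2) (μ.prod ν)) :
    MemLp (fun y => hellinger ν (π y) (π' y)) 2 μ := by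
  refine (memLp_two_iff_integrable_sq (hπ.1.hellinger_prod hπ'.1)).2 ?_
  simp only [hellinger_sq]
  have hsqrt := (memLp_two_sqrt (fun p : α × β => hπ0 p.1 p.2) hπ).sub
    (memLp_two_sqrt (fun p : α × β => hπ'0 p.1 p.2) hπ')
  exact hsqrt.integrable_sq.integral_prod_left.const_mul _

variable [SFinite μ]

lemma ae_integral_mul_hellinger_normalized_le (hπ0 : ∀ y, 0 ≤ π y) (hπ'0 : ∀ y, 0 ≤ π' y)
    (hπ : Integrable (fun p : α × β => π p.1 p.2) (μ.prod ν))
    (hπ' : Integrable (fun p : α × β => π' p.1 p.2) (μ.prod ν)) :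
    ∀ᵐ y ∂μ, (∫ θ, π y θ ∂ν) * hellinger ν (normalized ν (π y)) (normalized ν (π' y))
      ≤ 2 * (√(∫ θ, π y θ ∂ν) * hellinger ν (π y) (π' y)) := by
  filter_upwards [hπ.prod_right_ae, hπ'.prod_right_ae] with y hπy hπ'y
  rw [← mul_assoc]
  exact integral_mul_hellinger_normalized_le (hπ0 y) (hπ'0 y) hπy hπ'y

lemma integrable_integral_mul_hellinger_normalized (hπ0 : ∀ y, 0 ≤ π y)
    (hπ'0 : ∀ y, 0 ≤ π' y) (hπ : Integrable (fun p : α × β => π p.1 p.2) (μ.prod ν))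
    (hπ' : Integrable (fun p : α × β => π' p.1 p.2) (μ.prod ν)) :
    Integrable (fun y => (∫ θ, π y θ ∂ν) * hellinger ν (normalized ν (π y)) (normalized ν (π' y)))
      μ := by
  have hmass0 : ∀ y, 0 ≤ ∫ θ, π y θ ∂ν := fun y => integral_nonneg (hπ0 y)
  have hdom := ((memLp_two_sqrt hmass0 hπ.integral_prod_left).integrable_mul
    (memLp_two_hellinger_prod hπ0 hπ'0 hπ hπ')).const_mul 2
  refine hdom.mono' (hπ.integral_prod_left.1.mul
    (hπ.1.normalized_prod.hellinger_prod hπ'.1.normalized_prod)) ?_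
  filter_upwards [ae_integral_mul_hellinger_normalized_le hπ0 hπ'0 hπ hπ'] with y hy
  rw [Real.norm_of_nonneg (mul_nonneg (hmass0 y) (hellinger_nonneg _ _ _))]
  exact hy

lemma integral_integral_mul_hellinger_normalized_le (hπ0 : ∀ y, 0 ≤ π y)
    (hπ'0 : ∀ y, 0 ≤ π' y) (hπ : Integrable (fun p : α × β => π p.1 p.2) (μ.prod ν))
    (hπ' : Integrable (fun p : α × β => π' p.1 p.2) (μ.prod ν)) :
    ∫ y, (∫ θ, π y θ ∂ν) * hellinger ν (normalized ν (π y)) (normalized ν (π' y)) ∂μ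
      ≤ 2 * √(∫ y, ∫ θ, π y θ ∂ν ∂μ)
        * √((1 / 2) * ∫ y, ∫ θ, (√(π y θ) - √(π' y θ)) ^ 2 ∂ν ∂μ) := by
  have hmass0 : ∀ y, 0 ≤ ∫ θ, π y θ ∂ν := fun y => integral_nonneg (hπ0 y)
  have hsqrt_mass := memLp_two_sqrt hmass0 hπ.integral_prod_left
  have hhel := memLp_two_hellinger_prod hπ0 hπ'0 hπ hπ'
  calc _ ≤ ∫ y, 2 * (√(∫ θ, π y θ ∂ν) * hellinger ν (π y) (π' y)) ∂μ :=
        integral_mono_ae (integrable_integral_mul_hellinger_normalized hπ0 hπ'0 hπ hπ')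
          ((hsqrt_mass.integrable_mul hhel).const_mul 2)
          (ae_integral_mul_hellinger_normalized_le hπ0 hπ'0 hπ hπ')
    _ = 2 * ∫ y, √(∫ θ, π y θ ∂ν) * hellinger ν (π y) (π' y) ∂μ := integral_const_mul _ _
    _ ≤ 2 * (√(∫ y, √(∫ θ, π y θ ∂ν) ^ 2 ∂μ) * √(∫ y, hellinger ν (π y) (π' y) ^ 2 ∂μ)) := by
        gcongr
        exact integral_mul_le_sqrt_integral_sq_mul_sqrt_integral_sq hsqrt_mass hhel
    _ = _ := by
        simp only [Real.sq_sqrt (hmass0 _), hellinger_sq, integral_const_mul]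
        ring

end Disintegration

end MeasureTheory

theorem stmt_3_general {dY dΘ : ℕ} (π π' : (Fin dY → ℝ) → (Fin dΘ → ℝ) → ℝ)
    (hπpos : ∀ y θ, 0 ≤ π y θ) (hπ'pos : ∀ y θ, 0 ≤ π' y θ)
    (hπint : ∫ y, ∫ θ, π y θ = 1)
    (hπInt : Integrable (fun p : (Fin dY → ℝ) × (Fin dΘ → ℝ) => π p.1 p.2))
    (hπ'Int : Integrable (fun p : (Fin dY → ℝ) × (Fin dΘ → ℝ) => π' p.1 p.2))
    (ε δ : ℝ) (hδ : 0 < δ)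
    (hHell : Real.sqrt ((1/2) * ∫ y, ∫ θ,
        (Real.sqrt (π y θ) - Real.sqrt (π' y θ))^2) ≤ ε) :
    1 - δ < ∫ y in {y | Real.sqrt ((1/2) * ∫ θ,
        (Real.sqrt (π y θ / ∫ θ', π y θ') -
         Real.sqrt (π' y θ / ∫ θ', π' y θ'))^2) ≤ 2 * ε / δ}, (∫ θ', π y θ') := by
  rw [Measure.volume_eq_prod] at hπInt hπ'Int
  have hbound := integral_integral_mul_hellinger_normalized_le hπpos hπ'pos hπInt hπ'Int
  rw [hπint, Real.sqrt_one, mul_one] at hbound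
  have hmarkov := integral_sub_lt_setIntegral_le_of_integral_mul_le (t := 2 * ε / δ)
    (fun y => integral_nonneg (hπpos y)) (fun y => hellinger_nonneg _ _ _)
    hπInt.integral_prod_left (hπInt.1.normalized_prod.hellinger_prod hπ'Int.1.normalized_prod)
    (integrable_integral_mul_hellinger_normalized hπpos hπ'pos hπInt hπ'Int) hδ
    (by rw [div_mul_cancel₀ _ hδ.ne']; linarith)
  rwa [hπint] at hmarkov

/-- If `D_H(π_{Y,Θ}, π̃_{Y,Θ}) ≤ ε`, then for any `δ > 0`, with probability
greater than `1 - δ` over `Y ∼ π_Y`, `D_H(π_{Θ|Y}, π̃_{Θ|Y}) ≤ 2ε/δ`. -/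
theorem stmt_3 {dY dΘ : ℕ} (π π' : (Fin dY → ℝ) → (Fin dΘ → ℝ) → ℝ)
    (hπpos : ∀ y θ, 0 ≤ π y θ) (hπ'pos : ∀ y θ, 0 ≤ π' y θ)
    (hπint : ∫ y, ∫ θ, π y θ = 1) (hπ'int : ∫ y, ∫ θ, π' y θ = 1)
    (hπInt : Integrable (fun p : (Fin dY → ℝ) × (Fin dΘ → ℝ) => π p.1 p.2))
    (hπ'Int : Integrable (fun p : (Fin dY → ℝ) × (Fin dΘ → ℝ) => π' p.1 p.2))
    (ε δ : ℝ) (hδ : 0 < δ)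
    (hHell : Real.sqrt ((1/2) * ∫ y, ∫ θ,
        (Real.sqrt (π y θ) - Real.sqrt (π' y θ))^2) ≤ ε) :
    1 - δ < ∫ y in {y | Real.sqrt ((1/2) * ∫ θ,
        (Real.sqrt (π y θ / ∫ θ', π y θ') -
         Real.sqrt (π' y θ / ∫ θ', π' y θ'))^2) ≤ 2 * ε / δ}, (∫ θ', π y θ') :=
  stmt_3_general π π' hπpos hπ'pos hπint hπInt hπ'Int ε δ hδ hHell
end

section
/- Let π be a probability density on ℝ^d and let g be a nonnegative L² function approximating √π with ‖√π − g‖₂ ≤ ε/√2, and let z = ‖g‖₂². Define the normalized approximation p = g²/z. Then D_H(π, p) ≤ √2 ‖√π − g‖₂ ≤ ε. -/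
open MeasureTheory

/-- If `g ≥ 0` approximates `√π` with `‖√π − g‖₂ ≤ ε/√2`, and
`p = g²/z` with `z = ‖g‖₂²`, then `D_H(π, p) ≤ √2 ‖√π − g‖₂ ≤ ε`. -/
theorem stmt_4 {d : ℕ} (π g : (Fin d → ℝ) → ℝ)
    (hπpos : ∀ x, 0 ≤ π x) (hπint : ∫ x, π x = 1)
    (hgpos : ∀ x, 0 ≤ g x)
    (hg2 : Integrable (fun x => g x ^ 2))
    (hdiff : Integrable (fun x => (Real.sqrt (π x) - g x)^2))
    (ε : ℝ)
    (happrox : Real.sqrt (∫ x, (Real.sqrt (π x) - g x)^2) ≤ ε / Real.sqrt 2) :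
    Real.sqrt ((1/2) * ∫ x,
        (Real.sqrt (π x) - Real.sqrt (g x ^ 2 / ∫ y, g y ^ 2))^2) ≤
      Real.sqrt 2 * Real.sqrt (∫ x, (Real.sqrt (π x) - g x)^2) ∧
    Real.sqrt 2 * Real.sqrt (∫ x, (Real.sqrt (π x) - g x)^2) ≤ ε := by
  set u : (Fin d → ℝ) → ℝ := fun x => Real.sqrt (π x) with hu_def
  set z : ℝ := ∫ y, g y ^ 2 with hz_def
  set s : ℝ := Real.sqrt z with hs_def
  have hz0 : 0 ≤ z := integral_nonneg fun x => sq_nonneg _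
  have hs2 : s ^ 2 = z := Real.sq_sqrt hz0
  -- π is integrable
  have hπInt : Integrable π := by
    by_contra h
    rw [integral_undef h] at hπint
    norm_num at hπint
  -- u² = π
  have hu2eq : (fun x => u x ^ 2) = π := by
    funext x; exact Real.sq_sqrt (hπpos x)
  have hu2 : Integrable (fun x => u x ^ 2) := by rw [hu2eq]; exact hπInt
  have hu2int : ∫ x, u x ^ 2 = 1 := by rw [hu2eq]; exact hπint
  -- measurability
  have hgm : AEStronglyMeasurable g (volume : Measure (Fin d → ℝ)) := by
    have := Real.continuous_sqrt.comp_aestronglyMeasurable hg2.aestronglyMeasurable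
    simpa [Real.sqrt_sq (hgpos _)] using this
  have hum : AEStronglyMeasurable u (volume : Measure (Fin d → ℝ)) :=
    Real.continuous_sqrt.comp_aestronglyMeasurable hπInt.aestronglyMeasurable
  -- u*g integrable
  have hug : Integrable (fun x => u x * g x) := by
    refine Integrable.mono' (hu2.add hg2) (hum.mul hgm) (ae_of_all _ fun x => ?_)
    have h1 : 0 ≤ u x := Real.sqrt_nonneg _
    have h2 := hgpos x
    simp only [Pi.add_apply, Real.norm_eq_abs]
    rw [abs_of_nonneg (mul_nonneg h1 h2)]
    nlinarith [sq_nonneg (u x - g x)]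
  set I : ℝ := ∫ x, u x * g x with hI_def
  have hI0 : 0 ≤ I := integral_nonneg fun x => mul_nonneg (Real.sqrt_nonneg _) (hgpos x)
  set A : ℝ := ∫ x, (u x - g x) ^ 2 with hA_def
  have hA0 : 0 ≤ A := integral_nonneg fun x => sq_nonneg _
  have h12 : Integrable (fun x => u x ^ 2 + g x ^ 2) := hu2.add hg2
  have h12' : Integrable (fun x => u x ^ 2 + g x ^ 2 / z) := hu2.add (hg2.div_const z)
  -- expansion of A
  have hAeq : A = 1 + z - 2 * I := by
    have : A = ∫ x, (u x ^ 2 + g x ^ 2 - 2 * (u x * g x)) := by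
      apply integral_congr_ae; filter_upwards with x; ring
    rw [this, integral_sub h12 (hug.const_mul 2), integral_add hu2 hg2,
      integral_const_mul, hu2int]
  -- pointwise rewrite of sqrt(g²/z)
  have hpt : ∀ x, Real.sqrt (g x ^ 2 / z) = g x / s := by
    intro x
    rw [Real.sqrt_div (sq_nonneg _), Real.sqrt_sq (hgpos x)]
  have hJrw : (∫ x, (u x - Real.sqrt (g x ^ 2 / z)) ^ 2) = ∫ x, (u x - g x / s) ^ 2 := by
    apply integral_congr_ae; filter_upwards with x; rw [hpt x]
  set J : ℝ := ∫ x, (u x - g x / s) ^ 2 with hJ_def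
  have hJ0 : 0 ≤ J := integral_nonneg fun x => sq_nonneg _
  -- key inequality J ≤ 4 A
  have hkey : J ≤ 4 * A := by
    rcases eq_or_lt_of_le hz0 with hz | hz
    · -- z = 0 : g = 0 a.e.
      have hg0 : ∀ᵐ x, g x = 0 := by
        have h2 : (fun x => g x ^ 2) =ᵐ[volume] 0 := by
          rw [← integral_eq_zero_iff_of_nonneg (fun x => sq_nonneg (g x)) hg2]
          exact hz.symm
        filter_upwards [h2] with x hx
        have hx' : g x ^ 2 = 0 := hx
        exact pow_eq_zero_iff two_ne_zero |>.mp hx'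
      have hJ1 : J = 1 := by
        have : J = ∫ x, u x ^ 2 := by
          apply integral_congr_ae
          filter_upwards [hg0] with x hx
          rw [hx]; simp
        rw [this, hu2int]
      have hA1 : A = 1 := by
        have : A = ∫ x, u x ^ 2 := by
          apply integral_congr_ae
          filter_upwards [hg0] with x hx
          rw [hx]; simp
        rw [this, hu2int]
      rw [hJ1, hA1]; norm_num
    · have hspos : 0 < s := Real.sqrt_pos.mpr hz
      have hJeq : J = 2 - 2 / s * I := by
        have hptw : ∀ x, (u x - g x / s) ^ 2
            = u x ^ 2 + g x ^ 2 / z - 2 / s * (u x * g x) := by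
          intro x
          have hsne : s ≠ 0 := ne_of_gt hspos
          rw [← hs2]
          field_simp
          ring
        have : J = ∫ x, (u x ^ 2 + g x ^ 2 / z - 2 / s * (u x * g x)) := by
          apply integral_congr_ae; filter_upwards with x; rw [hptw x]
        rw [this, integral_sub h12' (hug.const_mul _),
          integral_add hu2 (hg2.div_const z), integral_const_mul, integral_div,
          hu2int, ← hz_def, ← hI_def, div_self (ne_of_gt hz)]
        ring
      -- algebra: with A = 1 + s² - 2I, I ≥ 0, s > 0, show 2 - 2I/s ≤ 4A
      rw [hJeq, hAeq, ← hs2]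
      have hA0' : 0 ≤ 1 + s ^ 2 - 2 * I := by
        have h := hAeq ▸ hA0
        linarith [hs2]
      have hdiv : (2 / s * I) * s = 2 * I := by field_simp
      have hmul : (2 - 2 / s * I) * s ≤ (4 * (1 + s ^ 2 - 2 * I)) * s := by
        rcases le_or_gt s (1/4) with hc | hc
        · nlinarith [hdiv, mul_nonneg hI0 (by linarith : (0:ℝ) ≤ 1 - 4 * s), hspos.le]
        · nlinarith [hdiv, mul_nonneg hA0' (by linarith : (0:ℝ) ≤ 4 * s - 1),
            sq_nonneg (1 - s)]
      exact le_of_mul_le_mul_right hmul hspos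
  constructor
  · rw [hJrw]
    have h1 : Real.sqrt 2 * Real.sqrt A = Real.sqrt (2 * A) :=
      (Real.sqrt_mul (by norm_num) A).symm
    rw [h1]
    apply Real.sqrt_le_sqrt
    linarith
  · calc Real.sqrt 2 * Real.sqrt A ≤ Real.sqrt 2 * (ε / Real.sqrt 2) := by
          apply mul_le_mul_of_nonneg_left happrox (Real.sqrt_nonneg 2)
       _ = ε := by
          field_simp
end

section
/- Let π and ρ be densities on ℝ^d, n < d, and define g(x_{≤n}) = ∫ (π/ρ)^{1/2}(x_{≤n},x_{>n}) ρ_{>n|≤n}(x_{>n}|x_{≤n}) dx_{>n}, with π̃*(x) ∝ g(x_{≤n})² ρ(x). Then for any nonnegative function g̃ on ℝⁿ such that π̃ ∝ g̃(x_{≤n})² ρ(x) is a density, the Pythagorean-type identity D_H(π, π̃)² = D_H(π, π̃*)² + ‖g√ρ‖₂ · D_H(π̃*, π̃)² holds. In particular D_H(π, π̃*) ≤ D_H(π, π̃), i.e., π̃* is the optimal approximation among densities of this form. -/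
/-! Put `F = √π`, `S = g √ρ / √zs` and `T = |g̃| √ρ / √zt`, unit vectors of `L²`.
Integrating out `v` first, `∫ √π √ρ (u, v) dv = g(u) ∫ ρ (u, v) dv`, so
`∫ √π · h(u) √ρ = ∫ g(u) √ρ · h(u) √ρ` for every `h`: `g √ρ` is the orthogonal projection of
`√π` onto the functions `h(u) √ρ`. Hence `⟨F, S⟩ = √zs` and `⟨F, T⟩ = √zs ⟨S, T⟩`, and expanding
`‖X - Y‖² = 2 - 2 ⟨X, Y⟩` gives the identity, whose last term is nonnegative. -/

open MeasureTheory

lemma Real.sqrt_sq_mul_div (a : ℝ) {r : ℝ} (hr : 0 ≤ r) (z : ℝ) :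
    √(a ^ 2 * r / z) = |a| / √z * √r := by
  rw [Real.sqrt_div (by positivity), Real.sqrt_mul (sq_nonneg a), Real.sqrt_sq_eq_abs]
  ring

lemma Real.sqrt_div_mul_div (a : ℝ) {b : ℝ} (hb : 0 ≤ b) (c : ℝ) :
    √(a / b) * (b / c) = √a * √b / c := by
  rw [Real.sqrt_div' a hb, show √a / √b * (b / c) = √a * (b / √b) / c by ring, Real.div_sqrt]

section L2

variable {α : Type*} [MeasurableSpace α] {μ : Measure α}

def IsUnitL2 (f : α → ℝ) (μ : Measure α) : Prop :=
  MemLp f 2 μ ∧ ∫ x, f x ^ 2 ∂μ = 1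

lemma isUnitL2_sqrt_div {f : α → ℝ} {z : ℝ} (h0 : ∀ x, 0 ≤ f x) (hf : ∫ x, f x ∂μ = z)
    (hz : z ≠ 0) : IsUnitL2 (fun x => √(f x / z)) μ := by
  have hf_int : Integrable f μ := .of_integral_ne_zero (hf ▸ hz)
  have hsq : ∀ x, √(f x / z) ^ 2 = f x / z := fun x =>
    Real.sq_sqrt (div_nonneg (h0 x) (hf ▸ integral_nonneg h0))
  refine ⟨?_, ?_⟩
  · rw [memLp_two_iff_integrable_sq (Real.continuous_sqrt.comp_aestronglyMeasurable
      (hf_int.div_const z).aestronglyMeasurable)]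
    simpa only [hsq] using hf_int.div_const z
  · simp only [hsq]
    rw [integral_div, hf, div_self hz]

lemma integral_sub_sq {f h : α → ℝ} (hf : MemLp f 2 μ) (hh : MemLp h 2 μ) :
    ∫ x, (f x - h x) ^ 2 ∂μ =
      ∫ x, f x ^ 2 ∂μ + ∫ x, h x ^ 2 ∂μ - 2 * ∫ x, f x * h x ∂μ := by
  have hfh : Integrable (fun x => f x * h x) μ := hf.integrable_mul hh
  calc ∫ x, (f x - h x) ^ 2 ∂μ = ∫ x, (f x ^ 2 + h x ^ 2 - 2 * (f x * h x)) ∂μ := by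
        congr 1; funext x; ring
    _ = _ := by
        rw [integral_sub, integral_add hf.integrable_sq hh.integrable_sq, integral_const_mul]
        exacts [hf.integrable_sq.add hh.integrable_sq, hfh.const_mul 2]

/-- The hypotheses say that `F - c S` is orthogonal to `S` and to `T`. -/
theorem half_integral_sub_sq_pythagorean {F S T : α → ℝ} {c : ℝ}
    (hF : IsUnitL2 F μ) (hS : IsUnitL2 S μ) (hT : IsUnitL2 T μ)
    (hFS : ∫ x, F x * S x ∂μ = c) (hFT : ∫ x, F x * T x ∂μ = c * ∫ x, S x * T x ∂μ) :
    (1 / 2) * ∫ x, (F x - T x) ^ 2 ∂μ =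
      (1 / 2) * (∫ x, (F x - S x) ^ 2 ∂μ) + c * ((1 / 2) * ∫ x, (S x - T x) ^ 2 ∂μ) := by
  rw [integral_sub_sq hF.1 hT.1, integral_sub_sq hF.1 hS.1, integral_sub_sq hS.1 hT.1,
    hF.2, hS.2, hT.2, hFS, hFT]
  ring

end L2

section Product

variable {α β : Type*} [MeasurableSpace β] {ν : Measure β}

lemma integral_sqrt_mul_sqrt_eq {π ρ : β → ℝ} (hρ0 : ∀ v, 0 ≤ ρ v) (hρ : Integrable ρ ν) :
    ∫ v, √(π v) * √(ρ v) ∂ν =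
      (∫ v, √(π v / ρ v) * (ρ v / ∫ v', ρ v' ∂ν) ∂ν) * ∫ v, ρ v ∂ν := by
  simp only [Real.sqrt_div_mul_div _ (hρ0 _), integral_div]
  rcases eq_or_ne (∫ v, ρ v ∂ν) 0 with hZ | hZ
  · -- `ρ` vanishes almost everywhere, and with it `√π √ρ`
    have hρ_ae := (integral_eq_zero_iff_of_nonneg hρ0 hρ).mp hZ
    rw [hZ, mul_zero, integral_eq_zero_of_ae]
    filter_upwards [hρ_ae] with v hv
    simp [hv]
  · exact (div_mul_cancel₀ _ hZ).symm

variable [MeasurableSpace α] {μ : Measure α} [SFinite μ] [SFinite ν]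

theorem integral_sqrt_mul_fst_mul_sqrt_eq {π ρ : α × β → ℝ} {g h : α → ℝ}
    (hρ0 : ∀ p, 0 ≤ ρ p) (hρ : Integrable ρ (μ.prod ν))
    (hg : ∀ u, g u = ∫ v, √(π (u, v) / ρ (u, v)) * (ρ (u, v) / ∫ v', ρ (u, v') ∂ν) ∂ν)
    (hπ2 : MemLp (fun p => √(π p)) 2 (μ.prod ν))
    (hg2 : MemLp (fun p => g p.1 * √(ρ p)) 2 (μ.prod ν))
    (hh2 : MemLp (fun p => h p.1 * √(ρ p)) 2 (μ.prod ν)) :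
    ∫ p, √(π p) * (h p.1 * √(ρ p)) ∂μ.prod ν =
      ∫ p, g p.1 * √(ρ p) * (h p.1 * √(ρ p)) ∂μ.prod ν := by
  rw [integral_prod _ (by exact hπ2.integrable_mul hh2),
    integral_prod _ (by exact hg2.integrable_mul hh2)]
  refine integral_congr_ae ?_
  filter_upwards [hρ.prod_right_ae] with u hu
  calc ∫ v, √(π (u, v)) * (h u * √(ρ (u, v))) ∂ν
      = h u * ∫ v, √(π (u, v)) * √(ρ (u, v)) ∂ν := by
        rw [← integral_const_mul]; congr 1; funext v; ring
    _ = h u * (g u * ∫ v, ρ (u, v) ∂ν) := by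
        rw [integral_sqrt_mul_sqrt_eq (fun v => hρ0 (u, v)) hu, hg u]
    _ = ∫ v, g u * √(ρ (u, v)) * (h u * √(ρ (u, v))) ∂ν := by
        rw [← integral_const_mul, ← integral_const_mul]
        congr 1; funext v
        linear_combination -(h u * g u) * Real.mul_self_sqrt (hρ0 (u, v))

theorem integral_sqrt_mul_fst_mul_sqrt_eq_mul {π ρ : α × β → ℝ} {g h : α → ℝ} {c : ℝ}
    (hc : c ≠ 0) (hρ0 : ∀ p, 0 ≤ ρ p) (hρ : Integrable ρ (μ.prod ν))
    (hg : ∀ u, g u = ∫ v, √(π (u, v) / ρ (u, v)) * (ρ (u, v) / ∫ v', ρ (u, v') ∂ν) ∂ν)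
    (hπ2 : MemLp (fun p => √(π p)) 2 (μ.prod ν))
    (hS2 : MemLp (fun p => g p.1 / c * √(ρ p)) 2 (μ.prod ν))
    (hh2 : MemLp (fun p => h p.1 * √(ρ p)) 2 (μ.prod ν)) :
    ∫ p, √(π p) * (h p.1 * √(ρ p)) ∂μ.prod ν =
      c * ∫ p, g p.1 / c * √(ρ p) * (h p.1 * √(ρ p)) ∂μ.prod ν := by
  have hgS (p : α × β) : g p.1 * √(ρ p) = c * (g p.1 / c * √(ρ p)) := by field_simp
  rw [integral_sqrt_mul_fst_mul_sqrt_eq hρ0 hρ hg hπ2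
    (by simpa only [← hgS] using hS2.const_mul c) hh2, ← integral_const_mul]
  simp only [hgS, mul_assoc]

end Product

theorem stmt_8_general {n m : ℕ} (π ρ : (Fin n → ℝ) × (Fin m → ℝ) → ℝ)
    (hπpos : ∀ p, 0 ≤ π p) (hρpos : ∀ p, 0 ≤ ρ p)
    (hπint : ∫ p, π p = 1) (hρint : ∫ p, ρ p = 1)
    (g : (Fin n → ℝ) → ℝ)
    (hgdef : ∀ u, g u = ∫ v, Real.sqrt (π (u, v) / ρ (u, v)) * (ρ (u, v) / ∫ v', ρ (u, v')))
    (zs : ℝ) (hzs : zs = ∫ p, g p.1 ^ 2 * ρ p) (hzs0 : 0 < zs)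
    (gt : (Fin n → ℝ) → ℝ)
    (zt : ℝ) (hzt : zt = ∫ p, gt p.1 ^ 2 * ρ p) (hzt0 : 0 < zt) :
    ((1/2) * ∫ p, (Real.sqrt (π p) - Real.sqrt (gt p.1 ^ 2 * ρ p / zt))^2 =
      (1/2) * (∫ p, (Real.sqrt (π p) - Real.sqrt (g p.1 ^ 2 * ρ p / zs))^2) +
        Real.sqrt zs *
          ((1/2) * ∫ p, (Real.sqrt (g p.1 ^ 2 * ρ p / zs) -
            Real.sqrt (gt p.1 ^ 2 * ρ p / zt))^2)) ∧
    Real.sqrt ((1/2) * ∫ p, (Real.sqrt (π p) - Real.sqrt (g p.1 ^ 2 * ρ p / zs))^2) ≤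
      Real.sqrt ((1/2) * ∫ p, (Real.sqrt (π p) - Real.sqrt (gt p.1 ^ 2 * ρ p / zt))^2) := by
  have hρ : Integrable ρ := .of_integral_ne_zero (by simp [hρint])
  have hg0 (u) : 0 ≤ g u := hgdef u ▸ integral_nonneg fun _ =>
    mul_nonneg (Real.sqrt_nonneg _) (div_nonneg (hρpos _) (integral_nonneg fun _ => hρpos _))
  have hsqρ (a : (Fin n → ℝ) → ℝ) (p) : 0 ≤ a p.1 ^ 2 * ρ p := mul_nonneg (sq_nonneg _) (hρpos p)
  have unitF : IsUnitL2 (fun p => √(π p)) volume := by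
    simpa only [div_one] using isUnitL2_sqrt_div hπpos hπint one_ne_zero
  have unitS := isUnitL2_sqrt_div (hsqρ g) hzs.symm hzs0.ne'
  have unitT := isUnitL2_sqrt_div (hsqρ gt) hzt.symm hzt0.ne'
  have hS (p) : √(g p.1 ^ 2 * ρ p / zs) = g p.1 / √zs * √(ρ p) := by
    rw [Real.sqrt_sq_mul_div _ (hρpos p), abs_of_nonneg (hg0 _)]
  have hT (p) : √(gt p.1 ^ 2 * ρ p / zt) = |gt p.1| / √zt * √(ρ p) :=
    Real.sqrt_sq_mul_div _ (hρpos p) _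
  simp only [hS, hT] at unitS unitT ⊢
  have inner_F {h : (Fin n → ℝ) → ℝ} (hh : MemLp (fun p => h p.1 * √(ρ p)) 2) :
      ∫ p, √(π p) * (h p.1 * √(ρ p)) = √zs * ∫ p, g p.1 / √zs * √(ρ p) * (h p.1 * √(ρ p)) := by
    simpa only [← Measure.volume_eq_prod] using integral_sqrt_mul_fst_mul_sqrt_eq_mul
      (μ := volume) (ν := volume) (by positivity) hρpos hρ hgdef unitF.1 unitS.1 hh
  have hpyth := half_integral_sub_sq_pythagorean unitF unitS unitT
    (by rw [inner_F (h := fun u => g u / √zs) unitS.1]; simp only [← pow_two, unitS.2, mul_one])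
    (inner_F (h := fun u => |gt u| / √zt) unitT.1)
  refine ⟨hpyth, Real.sqrt_le_sqrt ?_⟩
  rw [hpyth]
  exact le_add_of_nonneg_right (by positivity)

/-- Optimality of `π̃* ∝ g(x_{≤n})² ρ(x)` with
`g(x_{≤n}) = ∫ √(π/ρ) ρ_{>n|≤n}(x_{>n}|x_{≤n}) dx_{>n}`: for any nonnegative `g̃` with
`π̃ ∝ g̃(x_{≤n})² ρ(x)` a density, the Pythagorean identity
`D_H(π, π̃)² = D_H(π, π̃*)² + ‖g√ρ‖₂ D_H(π̃*, π̃)²` holds; in particular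
`D_H(π, π̃*) ≤ D_H(π, π̃)`. The first `n` and last `d−n` coordinates are modeled as the
two factors of a product space. -/
theorem stmt_8 {n m : ℕ} (π ρ : (Fin n → ℝ) × (Fin m → ℝ) → ℝ)
    (hπpos : ∀ p, 0 ≤ π p) (hρpos : ∀ p, 0 ≤ ρ p)
    (hπint : ∫ p, π p = 1) (hρint : ∫ p, ρ p = 1)
    (g : (Fin n → ℝ) → ℝ)
    (hgdef : ∀ u, g u = ∫ v, Real.sqrt (π (u, v) / ρ (u, v)) * (ρ (u, v) / ∫ v', ρ (u, v')))
    (zs : ℝ) (hzs : zs = ∫ p, g p.1 ^ 2 * ρ p) (hzs0 : 0 < zs)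
    (gt : (Fin n → ℝ) → ℝ) (hgt : ∀ u, 0 ≤ gt u)
    (zt : ℝ) (hzt : zt = ∫ p, gt p.1 ^ 2 * ρ p) (hzt0 : 0 < zt)
    (hgtInt : Integrable (fun p => gt p.1 ^ 2 * ρ p)) :
    ((1/2) * ∫ p, (Real.sqrt (π p) - Real.sqrt (gt p.1 ^ 2 * ρ p / zt))^2 =
      (1/2) * (∫ p, (Real.sqrt (π p) - Real.sqrt (g p.1 ^ 2 * ρ p / zs))^2) +
        Real.sqrt zs *
          ((1/2) * ∫ p, (Real.sqrt (g p.1 ^ 2 * ρ p / zs) -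
            Real.sqrt (gt p.1 ^ 2 * ρ p / zt))^2)) ∧
    Real.sqrt ((1/2) * ∫ p, (Real.sqrt (π p) - Real.sqrt (g p.1 ^ 2 * ρ p / zs))^2) ≤
      Real.sqrt ((1/2) * ∫ p, (Real.sqrt (π p) - Real.sqrt (gt p.1 ^ 2 * ρ p / zt))^2) :=
  stmt_8_general π ρ hπpos hρpos hπint hρint g hgdef zs hzs hzs0 gt zt hzt hzt0
end

section
/- For the Gaussian joint density π_{Y,Θ}(y,θ) ∝ exp(−½‖y − G(θ)‖² − ½‖θ − θ₀‖²) and reference ρ_{Y,Θ}(y,θ) ∝ exp(−½‖y − G(θ₀)‖² − ½‖θ − θ₀‖²), the diagnostic matrix H_Y = ∫(∇_y log(π/ρ))(∇_y log(π/ρ))ᵀ dπ equals ∫ (G(θ) − G(θ₀))(G(θ) − G(θ₀))ᵀ dπ_Θ, where π_Θ is the Gaussian prior N(θ₀, I). -/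
open MeasureTheory

lemma aux_fderiv {dY dΘ : ℕ} (G : (Fin dΘ → ℝ) → (Fin dY → ℝ)) (θ₀ : Fin dΘ → ℝ)
    (hG : ContDiff ℝ (⊤ : ℕ∞) G) (p : (Fin dY → ℝ) × (Fin dΘ → ℝ)) (i : Fin dY) :
    fderiv ℝ (fun q : (Fin dY → ℝ) × (Fin dΘ → ℝ) =>
        (∑ k, (q.1 k - G θ₀ k)^2)/2 - (∑ k, (q.1 k - G q.2 k)^2)/2) p (Pi.single i 1, 0)
      = G p.2 i - G θ₀ i := by
  have hGd : Differentiable ℝ G := hG.differentiable (by simp)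
  have hdiff : DifferentiableAt ℝ (fun q : (Fin dY → ℝ) × (Fin dΘ → ℝ) =>
      (∑ k, (q.1 k - G θ₀ k)^2)/2 - (∑ k, (q.1 k - G q.2 k)^2)/2) p := by fun_prop
  rw [← hdiff.lineDeriv_eq_fderiv]
  set v : Fin dY → ℝ := Pi.single i 1 with hv
  have h1 : ∀ (c : ℝ) (k : Fin dY), HasDerivAt
      (fun t : ℝ => (p.1 k + t * v k - c)^2)
      (2 * (p.1 k + 0 * v k - c) * v k) 0 := by
    intro c k
    have h : HasDerivAt (fun t : ℝ => p.1 k + t * v k - c) (v k) 0 :=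
      ((hasDerivAt_mul_const _).const_add _).sub_const _
    simpa using h.fun_pow 2
  have hsum : ∀ m : Fin dY → ℝ, HasDerivAt
      (fun t : ℝ => (∑ k, (p.1 k + t * v k - m k)^2)/2)
      ((∑ k, 2 * (p.1 k + 0 * v k - m k) * v k)/2) 0 :=
    fun m => (HasDerivAt.fun_sum (fun k _ => h1 (m k) k)).div_const 2
  have hline : HasLineDerivAt ℝ (fun q : (Fin dY → ℝ) × (Fin dΘ → ℝ) =>
      (∑ k, (q.1 k - G θ₀ k)^2)/2 - (∑ k, (q.1 k - G q.2 k)^2)/2)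
      (G p.2 i - G θ₀ i) p (v, 0) := by
    show HasDerivAt (fun t : ℝ => _) _ 0
    have heq : (fun t : ℝ =>
        (∑ k, ((p + t • (v, (0 : Fin dΘ → ℝ))).1 k - G θ₀ k)^2)/2 -
        (∑ k, ((p + t • (v, (0 : Fin dΘ → ℝ))).1 k
          - G (p + t • (v, (0 : Fin dΘ → ℝ))).2 k)^2)/2) =
        (fun t : ℝ => (∑ k, (p.1 k + t * v k - G θ₀ k)^2)/2 -
          (∑ k, (p.1 k + t * v k - G p.2 k)^2)/2) := by
      funext t
      simp [Prod.smul_def]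
    rw [heq]
    have h := (hsum (fun k => G θ₀ k)).fun_sub (hsum (fun k => G p.2 k))
    convert h using 1
    simp only [zero_mul, add_zero, hv, Pi.single_apply, mul_ite, mul_one, mul_zero,
      Finset.sum_ite_eq', Finset.mem_univ, if_true]
    ring
  exact hline.lineDeriv

/-- For the Gaussian joint density
`π(y,θ) ∝ exp(−½‖y − G(θ)‖² − ½‖θ − θ₀‖²)` and reference
`ρ(y,θ) ∝ exp(−½‖y − G(θ₀)‖² − ½‖θ − θ₀‖²)`, the diagnostic matrix
`H_Y = ∫ (∇_y log(π/ρ))(∇_y log(π/ρ))ᵀ dπ` equals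
`∫ (G(θ) − G(θ₀))(G(θ) − G(θ₀))ᵀ dπ_Θ` with `π_Θ = N(θ₀, I)`. -/
theorem stmt_11 {dY dΘ : ℕ} (G : (Fin dΘ → ℝ) → (Fin dY → ℝ)) (θ₀ : Fin dΘ → ℝ)
    (hG : ContDiff ℝ (⊤ : ℕ∞) G)
    (π ρ : (Fin dY → ℝ) × (Fin dΘ → ℝ) → ℝ) (prior : (Fin dΘ → ℝ) → ℝ)
    (hπ : ∀ p, π p = (2 * Real.pi) ^ (-(((dY : ℝ) + (dΘ : ℝ)) / 2)) *
        Real.exp (-(∑ i, (p.1 i - G p.2 i)^2) / 2 - (∑ j, (p.2 j - θ₀ j)^2) / 2))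
    (hρ : ∀ p, ρ p = (2 * Real.pi) ^ (-(((dY : ℝ) + (dΘ : ℝ)) / 2)) *
        Real.exp (-(∑ i, (p.1 i - G θ₀ i)^2) / 2 - (∑ j, (p.2 j - θ₀ j)^2) / 2))
    (hprior : ∀ θ, prior θ = (2 * Real.pi) ^ (-((dΘ : ℝ) / 2)) *
        Real.exp (-(∑ j, (θ j - θ₀ j)^2) / 2))
    (hInt : ∀ i j : Fin dY,
      Integrable (fun θ => (G θ i - G θ₀ i) * (G θ j - G θ₀ j) * prior θ)) :
    ∀ i j : Fin dY,
      (∫ p, (fderiv ℝ (fun q => Real.log (π q / ρ q)) p (Pi.single i 1, 0)) *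
          (fderiv ℝ (fun q => Real.log (π q / ρ q)) p (Pi.single j 1, 0)) * π p) =
        ∫ θ, (G θ i - G θ₀ i) * (G θ j - G θ₀ j) * prior θ := by
  intro i j
  have h2π : (0:ℝ) < 2 * Real.pi := by positivity
  -- 1. identify the log-ratio
  have hlog : (fun q => Real.log (π q / ρ q)) =
      (fun q : (Fin dY → ℝ) × (Fin dΘ → ℝ) =>
        (∑ k, (q.1 k - G θ₀ k)^2)/2 - (∑ k, (q.1 k - G q.2 k)^2)/2) := by
    funext q
    have hc : ((2 * Real.pi) ^ (-(((dY : ℝ) + (dΘ : ℝ)) / 2)) : ℝ) ≠ 0 :=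
      ne_of_gt (Real.rpow_pos_of_pos h2π _)
    rw [hπ, hρ, mul_div_mul_left _ _ hc, ← Real.exp_sub, Real.log_exp]
    ring
  -- 2. the gaussian factorization of π
  have hsplit : ∀ p : (Fin dY → ℝ) × (Fin dΘ → ℝ),
      π p = prior p.2 * ∏ k, ProbabilityTheory.gaussianPDFReal (G p.2 k) 1 (p.1 k) := by
    intro p
    rw [hπ, hprior]
    simp only [ProbabilityTheory.gaussianPDFReal, NNReal.coe_one, mul_one]
    rw [Finset.prod_mul_distrib, Finset.prod_const, ← Real.exp_sum]
    have hconst : ((2 * Real.pi) ^ (-(((dY : ℝ) + (dΘ : ℝ)) / 2)) : ℝ) =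
        (2 * Real.pi) ^ (-((dΘ : ℝ) / 2)) * ((√(2 * Real.pi))⁻¹) ^ dY := by
      rw [Real.sqrt_eq_rpow, ← Real.rpow_neg_one ((2 * Real.pi) ^ ((1:ℝ)/2)),
        ← Real.rpow_natCast (((2 * Real.pi) ^ ((1:ℝ)/2)) ^ (-1:ℝ)) dY,
        ← Real.rpow_mul h2π.le, ← Real.rpow_mul h2π.le, ← Real.rpow_add h2π]
      ring_nf
    rw [Finset.card_univ, Fintype.card_fin, hconst, mul_mul_mul_comm, ← Real.exp_add]
    congr 1
    have hs : ∑ k, -(p.1 k - G p.2 k)^2/2 = (-∑ k, (p.1 k - G p.2 k)^2)/2 := by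
      rw [← Finset.sum_div, ← Finset.sum_neg_distrib]
    rw [Real.exp_eq_exp, hs]
    ring
  -- gaussian facts
  have gInt : ∀ m : Fin dY → ℝ, Integrable
      (fun y : Fin dY → ℝ => ∏ k, ProbabilityTheory.gaussianPDFReal (m k) 1 (y k)) :=
    fun m => Integrable.fintype_prod (fun k => ProbabilityTheory.integrable_gaussianPDFReal _ _)
  have gOne : ∀ m : Fin dY → ℝ,
      (∫ y : Fin dY → ℝ, ∏ k, ProbabilityTheory.gaussianPDFReal (m k) 1 (y k)) = 1 := by
    intro m
    rw [integral_fintype_prod_volume_eq_prod (f := fun k => ProbabilityTheory.gaussianPDFReal (m k) 1)]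
    simp [ProbabilityTheory.integral_gaussianPDFReal_eq_one _ one_ne_zero]
  have gNonneg : ∀ (m : Fin dY → ℝ) (y : Fin dY → ℝ),
      0 ≤ ∏ k, ProbabilityTheory.gaussianPDFReal (m k) 1 (y k) :=
    fun m y => Finset.prod_nonneg fun k _ => ProbabilityTheory.gaussianPDFReal_nonneg _ _ _
  -- rewrite the integrand
  set f : (Fin dΘ → ℝ) → ℝ := fun θ => (G θ i - G θ₀ i) * (G θ j - G θ₀ j) * prior θ with hf
  set F : (Fin dY → ℝ) × (Fin dΘ → ℝ) → ℝ :=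
    fun p => f p.2 * ∏ k, ProbabilityTheory.gaussianPDFReal (G p.2 k) 1 (p.1 k) with hF
  have hEq : (fun p : (Fin dY → ℝ) × (Fin dΘ → ℝ) =>
      (fderiv ℝ (fun q => Real.log (π q / ρ q)) p (Pi.single i 1, 0)) *
        (fderiv ℝ (fun q => Real.log (π q / ρ q)) p (Pi.single j 1, 0)) * π p) = F := by
    funext p
    rw [hlog, aux_fderiv G θ₀ hG p i, aux_fderiv G θ₀ hG p j, hsplit p, hF, hf]
    ring
  rw [hEq]
  -- measurability
  have hpriorC : Continuous prior := by
    rw [funext hprior]; fun_prop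
  have hGC : Continuous G := hG.continuous
  have hFC : Continuous F := by
    rw [hF, hf]
    simp only [ProbabilityTheory.gaussianPDFReal, NNReal.coe_one, mul_one]
    fun_prop
  -- integrability on the product
  have hFInt : Integrable F (volume.prod volume) := by
    rw [integrable_prod_iff' (hFC.aestronglyMeasurable)]
    constructor
    · refine ae_of_all _ fun θ => ?_
      exact (gInt (G θ)).const_mul (f θ)
    · have : (fun θ => ∫ y, ‖F (y, θ)‖) = fun θ => ‖f θ‖ := by
        funext θ
        have : (fun y => ‖F (y, θ)‖) =
            fun y => ‖f θ‖ * ∏ k, ProbabilityTheory.gaussianPDFReal (G θ k) 1 (y k) := by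
          funext y
          rw [hF]
          simp only [norm_mul]
          rw [Real.norm_of_nonneg (gNonneg (G θ) y)]
        rw [this, integral_const_mul, gOne, mul_one]
      rw [this]
      exact (hInt i j).norm
  -- Fubini
  have hvol : (volume : Measure ((Fin dY → ℝ) × (Fin dΘ → ℝ))) = volume.prod volume :=
    (Measure.volume_eq_prod _ _)
  rw [hvol, integral_prod_symm F hFInt]
  have : (fun θ => ∫ y, F (y, θ)) = f := by
    funext θ
    rw [hF]
    simp only
    rw [integral_const_mul, gOne, mul_one]
  rw [this]
end
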